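/- Under the full-convexity assumptions on Φ(x) = f(x) + g(c(x)), if the problem possesses a stationary minimizer x̄ (i.e., there exists ȳ ∈ ∂g(c(x̄)) with ∇f(x̄) + c'(x̄)ᵀȳ = 0), then every minimizer of Φ is stationary with the same multiplier ȳ. -/

import Mathlib

open scoped RealInnerProductSpace

noncomputable section

abbrev Eu (m : ℕ) := EuclideanSpace ℝ (Fin m)

def EProper {E : Type*} (φ : E → EReal) : Prop :=
  (∃ x, φ x ≠ ⊤) ∧ ∀ x, φ x ≠ ⊥

def EConvexOn {E : Type*} [AddCommGroup E] [Module ℝ E] (φ : E → EReal) : Prop :=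
  ∀ x y : E, ∀ a b : ℝ, 0 ≤ a → 0 ≤ b → a + b = 1 →
    φ (a • x + b • y) ≤ (a : EReal) * φ x + (b : EReal) * φ y

def edom {E : Type*} (φ : E → EReal) : Set E := {x | φ x ≠ ⊤}

def hzn {E : Type*} [AddCommGroup E] (φ : E → EReal) : Set E :=
  {v | ∀ z ∈ edom φ, φ (z + v) ≤ φ z}

/-- `c` is `(-hzn g)`-convex. -/
def HznConvex {n m : ℕ} (g : Eu m → EReal) (c : Eu n → Eu m) : Prop :=
  ∀ x xp : Eu n, ∀ l : ℝ, 0 ≤ l → l ≤ 1 →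
    c (l • x + (1 - l) • xp) - l • c x - (1 - l) • c xp ∈ hzn g

/-- Convex (Fenchel) conjugate. -/
def econj {m : ℕ} (φ : Eu m → EReal) (y : Eu m) : EReal :=
  ⨆ z, ((inner ℝ z y : ℝ) : EReal) - φ z

/-- Convex subdifferential of an extended-real-valued function. -/
def esubdiff {m : ℕ} (g : Eu m → EReal) (z₀ : Eu m) : Set (Eu m) :=
  {y | ∀ z, g z₀ + ((inner ℝ y (z - z₀) : ℝ) : EReal) ≤ g z}

/-- The set of Lagrange multipliers associated with `xb`. -/
def multSet {n m : ℕ} (f : Eu n → ℝ) (g : Eu m → EReal) (c : Eu n → Eu m)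
    (xb : Eu n) : Set (Eu m) :=
  {y | y ∈ esubdiff g (c xb) ∧
    ∀ d : Eu n, fderiv ℝ f xb d + (inner ℝ y (fderiv ℝ c xb d) : ℝ) = 0}

/-- Primal objective `Φ(x) = f(x) + g(c(x))`. -/
def primalFn {n m : ℕ} (f : Eu n → ℝ) (g : Eu m → EReal) (c : Eu n → Eu m)
    (x : Eu n) : EReal :=
  ((f x : ℝ) : EReal) + g (c x)

/-- A differentiable convex function with vanishing derivative at a point attains its
global minimum there. -/
lemma min_of_fderiv_zero {n : ℕ} {L : Eu n → ℝ} (hconv : ConvexOn ℝ Set.univ L)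
    (hdiff : Differentiable ℝ L) {x₀ : Eu n} (h0 : fderiv ℝ L x₀ = 0) (x : Eu n) :
    L x₀ ≤ L x := by
  set d := x - x₀ with hd
  have hline : ∀ t : ℝ, HasDerivAt (fun t : ℝ => x₀ + t • d) d t := by
    intro t
    simpa using ((hasDerivAt_id t).smul_const d).const_add x₀
  set φ : ℝ → ℝ := fun t => L (x₀ + t • d) with hφ
  have hφconv : ConvexOn ℝ Set.univ φ := by
    have h := hconv.comp_affineMap (AffineMap.lineMap x₀ x : ℝ →ᵃ[ℝ] Eu n)
    have heq : (L ∘ (AffineMap.lineMap x₀ x : ℝ →ᵃ[ℝ] Eu n)) = φ := by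
      funext t
      simp [hφ, AffineMap.lineMap_apply, hd]
      congr 1
      module
    rw [heq] at h
    simpa using h
  have hder : HasDerivAt φ 0 0 := by
    have h1 : HasDerivAt φ (fderiv ℝ L (x₀ + (0:ℝ) • d) d) 0 :=
      ((hdiff (x₀ + (0:ℝ) • d)).hasFDerivAt).comp_hasDerivAt 0 (hline 0)
    simpa [h0] using h1
  have hsl := hφconv.le_slope_of_hasDerivAt (Set.mem_univ 0) (Set.mem_univ 1) zero_lt_one hder
  rw [slope_def_field] at hsl
  have h01 : φ 0 ≤ φ 1 := by
    have : (0:ℝ) ≤ (φ 1 - φ 0) / (1 - 0) := hsl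
    simp at this; linarith
  simpa [hφ, hd] using h01

/-- The derivative of the smooth part of the Lagrangian. -/
lemma lagrangian_hasFDerivAt {n m : ℕ} {f : Eu n → ℝ} {c : Eu n → Eu m}
    (hf : ContDiff ℝ 1 f) (hc : ContDiff ℝ 1 c) (yb : Eu m) (x : Eu n) :
    HasFDerivAt (fun x => f x + (inner ℝ yb (c x) : ℝ))
      ((fderiv ℝ f x) + (innerSL ℝ yb).comp (fderiv ℝ c x)) x := by
  have h1 : HasFDerivAt f (fderiv ℝ f x) x :=
    (hf.differentiable one_ne_zero x).hasFDerivAt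
  have h2 : HasFDerivAt (fun x => (inner ℝ yb (c x) : ℝ))
      ((innerSL ℝ yb).comp (fderiv ℝ c x)) x :=
    ((innerSL ℝ yb).hasFDerivAt).comp x (hc.differentiable one_ne_zero x).hasFDerivAt
  exact h1.add h2

/-- If the problem has a stationary minimizer `xb` with multiplier `yb`, then every
minimizer is stationary with the same multiplier `yb`. -/
theorem all_minimizers_stationary {n m : ℕ} (f : Eu n → ℝ) (g : Eu m → EReal)
    (c : Eu n → Eu m)
    (hf : ContDiff ℝ 1 f) (hfc : ConvexOn ℝ Set.univ f)
    (hgp : EProper g) (hglsc : LowerSemicontinuous g) (hgc : EConvexOn g)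
    (hc : ContDiff ℝ 1 c) (hcK : HznConvex g c)
    (xb : Eu n) (hxb : ∀ x : Eu n, primalFn f g c xb ≤ primalFn f g c x)
    (yb : Eu m) (hyb : yb ∈ multSet f g c xb) :
    ∀ xt : Eu n, (∀ x : Eu n, primalFn f g c xt ≤ primalFn f g c x) →
      yb ∈ multSet f g c xt := by
  intro xt hxt
  obtain ⟨hsub, hstat⟩ := hyb
  -- g (c xb) is finite
  obtain ⟨⟨z₀, hz₀⟩, hbot⟩ := hgp
  have hGtop : g (c xb) ≠ ⊤ := by
    intro h
    have := hsub z₀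
    rw [h, EReal.top_add_of_ne_bot (EReal.coe_ne_bot _)] at this
    exact hz₀ (top_le_iff.mp this)
  set gb : ℝ := (g (c xb)).toReal with hgb
  have hG : g (c xb) = (gb : EReal) := (EReal.coe_toReal hGtop (hbot _)).symm
  -- for v in hzn g, ⟪yb, v⟫ ≤ 0
  have hkey : ∀ v ∈ hzn g, (inner ℝ yb v : ℝ) ≤ 0 := by
    intro v hv
    have h1 : g (c xb + v) ≤ g (c xb) := hv (c xb) (by simpa [edom] using hGtop)
    have h2 := hsub (c xb + v)
    simp only [add_sub_cancel_left] at h2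
    have : (gb : EReal) + ((inner ℝ yb v : ℝ) : EReal) ≤ (gb : EReal) := by
      calc (gb : EReal) + ((inner ℝ yb v : ℝ) : EReal) = g (c xb) + _ := by rw [hG]
        _ ≤ g (c xb + v) := h2
        _ ≤ g (c xb) := h1
        _ = (gb : EReal) := hG
    rw [← EReal.coe_add, EReal.coe_le_coe_iff] at this
    linarith
  -- the smooth Lagrangian L
  set L : Eu n → ℝ := fun x => f x + (inner ℝ yb (c x) : ℝ) with hL
  have hLdiff : Differentiable ℝ L := fun x => (lagrangian_hasFDerivAt hf hc yb x).differentiableAt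
  have hLfd : ∀ x d, fderiv ℝ L x d = fderiv ℝ f x d + (inner ℝ yb (fderiv ℝ c x d) : ℝ) := by
    intro x d
    rw [(lagrangian_hasFDerivAt hf hc yb x).fderiv]
    simp
  -- L is convex
  have hLconv : ConvexOn ℝ Set.univ L := by
    refine hfc.add ⟨convex_univ, ?_⟩
    intro x _ xp _ a b ha hb hab
    have hb' : b = 1 - a := by linarith
    have hv := hcK x xp a ha (by linarith)
    have := hkey _ hv
    rw [inner_sub_right, inner_sub_right, real_inner_smul_right, real_inner_smul_right] at this
    rw [hb']
    dsimp only [smul_eq_mul]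
    linarith
  -- xb minimizes L
  have hLfd0 : fderiv ℝ L xb = 0 := by
    ext d
    rw [hLfd]
    simpa using hstat d
  have hLmin : ∀ x, L xb ≤ L x := min_of_fderiv_zero hLconv hLdiff hLfd0
  -- notation
  set A := f xb with hA
  set At := f xt with hAt
  set sb : ℝ := (inner ℝ yb (c xb) : ℝ) with hsb
  set st : ℝ := (inner ℝ yb (c xt) : ℝ) with hst
  -- g (c xt) is finite
  have hPhit : ((At : ℝ) : EReal) + g (c xt) ≤ ((A : ℝ) : EReal) + (gb : EReal) := by
    have := hxt xb
    rwa [primalFn, primalFn, hG] at this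
  have hGt_top : g (c xt) ≠ ⊤ := by
    intro h
    rw [h, EReal.add_top_of_ne_bot (EReal.coe_ne_bot _)] at hPhit
    rw [← EReal.coe_add] at hPhit
    exact (EReal.coe_ne_top _) (top_le_iff.mp hPhit)
  set gt : ℝ := (g (c xt)).toReal with hgtdef
  have hGt : g (c xt) = (gt : EReal) := (EReal.coe_toReal hGt_top (hbot _)).symm
  -- subgradient inequality at c xt, in reals
  have hsub_t : gb + (st - sb) ≤ gt := by
    have := hsub (c xt)
    rw [hG, hGt, inner_sub_right, ← hst, ← hsb, ← EReal.coe_add, EReal.coe_le_coe_iff] at this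
    exact this
  -- primal inequality in reals
  have hprim : At + gt ≤ A + gb := by
    rw [hGt, ← EReal.coe_add, ← EReal.coe_add, EReal.coe_le_coe_iff] at hPhit
    exact hPhit
  -- L equality
  have hLeq : At + st = A + sb := by
    have h1 : A + sb ≤ At + st := hLmin xt
    linarith
  have hgt_eq : gt = gb + (st - sb) := by linarith
  constructor
  · -- subdifferential at c xt
    intro z
    have := hsub z
    rw [hG] at this
    rw [hGt, hgt_eq]
    have hz1 : (inner ℝ yb (z - c xt) : ℝ) = (inner ℝ yb z : ℝ) - st := by
      rw [inner_sub_right]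
    have hz2 : (inner ℝ yb (z - c xb) : ℝ) = (inner ℝ yb z : ℝ) - sb := by
      rw [inner_sub_right]
    calc ((gb + (st - sb) : ℝ) : EReal) + ((inner ℝ yb (z - c xt) : ℝ) : EReal)
        = ((gb : ℝ) : EReal) + ((inner ℝ yb (z - c xb) : ℝ) : EReal) := by
          rw [hz1, hz2, ← EReal.coe_add, ← EReal.coe_add]
          exact congrArg _ (by ring)
      _ ≤ g z := this
  · -- stationarity at xt
    intro d
    have hmin : IsLocalMin L xt := by
      have : ∀ x, L xt ≤ L x := by
        intro x
        calc L xt = At + st := rfl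
          _ = A + sb := hLeq
          _ = L xb := rfl
          _ ≤ L x := hLmin x
      exact Filter.Eventually.of_forall this
    have h0 : fderiv ℝ L xt = 0 := hmin.fderiv_eq_zero
    have := hLfd xt d
    rw [h0] at this
    simpa using this.symm
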